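/- Let d ≥ 2 and p ≥ 2 be integers, ε > 0, and define g : ℝ^d → ℝ by g(x) = ∏_{i=1}^d x_i^p. Then, with all integrals taken over the cube (0,ε)^d and Δg = Σ_{i=1}^d ∂²g/∂x_i², (∫ (Δg(x))² dx) / (∫ g(x) dx) = p²·(p−1)²·(p+1)^d · [ d/((2p−3)·(2p+1)^(d−1)) + d·(d−1)/((2p−1)²·(2p+1)^(d−2)) ] · ε^(pd−4). Consequently the quotient of fourth-order stiffness to row-sum lumped mass of a corner-cut basis function scales as ε^(pd−4), and diverges as ε → 0⁺ precisely when p·d < 4. -/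

import Mathlib

/-!
Write `e k = update (fun _ => p) k (p - 2)`. Then `Δg = p (p - 1) ∑ₖ x ^ e k`, so `(Δg)²` is the
double sum of the monomials `x ^ (e k + e l)`. Over the cube every monomial integral factors into
one-dimensional moments `M n = ∫₀^ε tⁿ dt = ε ^ (n + 1) / (n + 1)`. The `d` diagonal terms each
contribute `M (2p - 4) · M (2p) ^ (d - 1)`, the `d (d - 1)` off-diagonal terms each contribute
`M (2p - 2)² · M (2p) ^ (d - 2)`, and the lumped mass is `M p ^ d`.
-/

open MeasureTheory Set Function

noncomputable def powMoment (ε : ℝ) (n : ℕ) : ℝ := ε ^ (n + 1) / (n + 1)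

section Integrals

variable {ι : Type*} [Fintype ι]

theorem setIntegral_univ_pi_prod (s : Set ℝ) (f : ι → ℝ → ℝ) :
    ∫ x in univ.pi fun _ => s, ∏ i, f i (x i) = ∏ i, ∫ t in s, f i t := by
  rw [volume_pi, Measure.restrict_pi_pi, integral_fintype_prod_eq_prod]

theorem integral_Ioo_zero_pow {ε : ℝ} (hε : 0 ≤ ε) (n : ℕ) :
    ∫ t in Ioo 0 ε, t ^ n = powMoment ε n := by
  rw [← integral_Ioc_eq_integral_Ioo, ← intervalIntegral.integral_of_le hε, integral_pow,
    zero_pow n.succ_ne_zero, sub_zero, powMoment]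

theorem setIntegral_univ_pi_Ioo_prod_pow {ε : ℝ} (hε : 0 ≤ ε) (e : ι → ℕ) :
    ∫ x in univ.pi fun _ => Ioo 0 ε, ∏ i, x i ^ e i = ∏ i, powMoment ε (e i) := by
  simp only [setIntegral_univ_pi_prod _ fun i t => t ^ e i, integral_Ioo_zero_pow hε]

theorem integrableOn_univ_pi_Ioo {f : (ι → ℝ) → ℝ} (hf : Continuous f) (a b : ℝ) :
    IntegrableOn f (univ.pi fun _ => Ioo a b) :=
  (hf.integrableOn_Icc (a := fun _ => a) (b := fun _ => b)).mono_set <| by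
    rw [← pi_univ_Icc]
    exact pi_mono fun _ _ => Ioo_subset_Icc_self

end Integrals

section Combinatorics

variable {ι : Type*} [Fintype ι] [DecidableEq ι]

theorem Finset.prod_univ_eq_mul_pow_of_ne {M : Type*} [CommMonoid M] (g : ι → M) (i : ι)
    {a c : M} (hi : g i = a) (h : ∀ l, l ≠ i → g l = c) :
    ∏ l, g l = a * c ^ (Fintype.card ι - 1) := by
  rw [← Finset.mul_prod_erase _ _ (Finset.mem_univ i), hi,
    Finset.prod_congr rfl fun l hl => h l (Finset.ne_of_mem_erase hl), Finset.prod_const,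
    Finset.card_erase_of_mem (Finset.mem_univ i), Finset.card_univ]

theorem Finset.prod_univ_eq_mul_mul_pow_of_ne {M : Type*} [CommMonoid M] (g : ι → M) {i j : ι}
    (hij : i ≠ j) {a b c : M} (hi : g i = a) (hj : g j = b)
    (h : ∀ l, l ≠ i → l ≠ j → g l = c) :
    ∏ l, g l = a * b * c ^ (Fintype.card ι - 2) := by
  have hj' : j ∈ Finset.univ.erase i := Finset.mem_erase.2 ⟨hij.symm, Finset.mem_univ j⟩
  rw [← Finset.mul_prod_erase _ _ (Finset.mem_univ i), ← Finset.mul_prod_erase _ _ hj', hi, hj,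
    Finset.prod_congr rfl fun l hl => h l (Finset.ne_of_mem_erase (Finset.mem_of_mem_erase hl))
      (Finset.ne_of_mem_erase hl),
    Finset.prod_const, Finset.card_erase_of_mem hj', Finset.card_erase_of_mem (Finset.mem_univ i),
    Finset.card_univ, Nat.sub_sub, mul_assoc]

theorem Finset.sum_univ_sum_univ_eq_of_diag_of_offDiag {R : Type*} [Ring R] (T : ι → ι → R)
    {A B : R} (hA : ∀ i, T i i = A) (hB : ∀ i j, i ≠ j → T i j = B) :
    ∑ i, ∑ j, T i j = Fintype.card ι * A + Fintype.card ι * (Fintype.card ι - 1) * B := by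
  have hrow : ∀ i, ∑ j, T i j = A + (Fintype.card ι - 1) * B := fun i => by
    rw [← Finset.add_sum_erase _ _ (Finset.mem_univ i), hA,
      Finset.sum_congr rfl fun j hj => hB i j (Finset.ne_of_mem_erase hj).symm, Finset.sum_const,
      Finset.card_erase_of_mem (Finset.mem_univ i), Finset.card_univ, nsmul_eq_mul,
      Nat.cast_sub (Fintype.card_pos_iff.2 ⟨i⟩), Nat.cast_one]
  simp only [hrow, Finset.sum_const, Finset.card_univ, nsmul_eq_mul]
  noncomm_ring

end Combinatorics

theorem sq_sum_prod_pow {κ ι R : Type*} [Fintype κ] [Fintype ι] [CommSemiring R] (x : ι → R)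
    (e : κ → ι → ℕ) :
    (∑ k, ∏ i, x i ^ e k i) ^ 2 = ∑ k, ∑ k', ∏ i, x i ^ (e k i + e k' i) := by
  simp only [sq, Finset.sum_mul_sum, ← Finset.prod_mul_distrib, pow_add]

section Laplacian

variable {ι : Type*} [Fintype ι] [DecidableEq ι]

theorem prod_pow_update {M : Type*} [CommMonoid M] (x : ι → M) (e : ι → ℕ) (k : ι) (n : ℕ) :
    ∏ i, x i ^ update e k n i = x k ^ n * ∏ i ∈ Finset.univ.erase k, x i ^ e i := by
  rw [← Finset.mul_prod_erase _ _ (Finset.mem_univ k), update_self]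
  exact congrArg _ <| Finset.prod_congr rfl fun i hi => by
    rw [update_of_ne (Finset.ne_of_mem_erase hi)]

theorem hasFDerivAt_prod_pow (e : ι → ℕ) (x : ι → ℝ) :
    HasFDerivAt (fun y : ι → ℝ => ∏ i, y i ^ e i)
      (∑ i, (∏ j ∈ Finset.univ.erase i, x j ^ e j) •
        ((e i * x i ^ (e i - 1)) • (ContinuousLinearMap.proj i : (ι → ℝ) →L[ℝ] ℝ))) x :=
  HasFDerivAt.finsetProd fun i _ =>
    (hasDerivAt_pow (e i) (x i)).comp_hasFDerivAt x (hasFDerivAt_apply i x)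

theorem fderiv_prod_pow_apply_single (e : ι → ℕ) (x : ι → ℝ) (k : ι) :
    fderiv ℝ (fun y : ι → ℝ => ∏ i, y i ^ e i) x (Pi.single k 1) =
      e k * ∏ i, x i ^ update e k (e k - 1) i := by
  rw [(hasFDerivAt_prod_pow e x).fderiv, sum_apply,
    Finset.sum_eq_single k (fun i _ hik => by simp [hik.symm]) (by simp), prod_pow_update]
  simp only [smul_apply, ContinuousLinearMap.proj_apply, Pi.single_eq_same, smul_eq_mul, mul_one]
  ring

theorem fderiv_fderiv_prod_pow_apply_single (e : ι → ℕ) (x : ι → ℝ) (k : ι) :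
    fderiv ℝ (fun y => fderiv ℝ (fun y : ι → ℝ => ∏ i, y i ^ e i) y (Pi.single k 1)) x
        (Pi.single k 1) =
      e k * (e k - 1 : ℕ) * ∏ i, x i ^ update e k (e k - 2) i := by
  simp only [fderiv_prod_pow_apply_single]
  rw [fderiv_const_mul (hasFDerivAt_prod_pow _ x).differentiableAt, smul_apply,
    fderiv_prod_pow_apply_single]
  simp [Nat.sub_sub, mul_assoc]

theorem sum_fderiv_fderiv_prod_pow_apply_single (p : ℕ) (x : ι → ℝ) :
    ∑ k, fderiv ℝ (fun y => fderiv ℝ (fun y : ι → ℝ => ∏ i, y i ^ p) y (Pi.single k 1)) x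
        (Pi.single k 1) =
      p * (p - 1) * ∑ k, ∏ i, x i ^ update (fun _ => p) k (p - 2) i := by
  rw [Finset.mul_sum]
  refine Finset.sum_congr rfl fun k _ => ?_
  rw [fderiv_fderiv_prod_pow_apply_single (fun _ => p)]
  rcases p with _ | p <;> simp

theorem setIntegral_univ_pi_Ioo_sq_sum_fderiv_fderiv_prod_pow {p : ℕ} (hp : 2 ≤ p) {ε : ℝ}
    (hε : 0 ≤ ε) :
    ∫ x in univ.pi fun _ => Ioo 0 ε,
        (∑ k, fderiv ℝ (fun y => fderiv ℝ (fun y : ι → ℝ => ∏ i, y i ^ p) y (Pi.single k 1)) x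
          (Pi.single k 1)) ^ 2 =
      (p * (p - 1)) ^ 2 *
        (Fintype.card ι * (powMoment ε (2 * p - 4) * powMoment ε (2 * p) ^ (Fintype.card ι - 1)) +
          Fintype.card ι * (Fintype.card ι - 1) * (powMoment ε (2 * p - 2) *
            powMoment ε (2 * p - 2) * powMoment ε (2 * p) ^ (Fintype.card ι - 2))) := by
  set e : ι → ι → ℕ := fun k => update (fun _ => p) k (p - 2)
  have hintegrable : ∀ k l, IntegrableOn (fun x : ι → ℝ => ∏ i, x i ^ (e k i + e l i))
      (univ.pi fun _ => Ioo 0 ε) := fun k l => integrableOn_univ_pi_Ioo (by fun_prop) _ _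
  simp only [sum_fderiv_fderiv_prod_pow_apply_single, mul_pow _ (∑ _, _), sq_sum_prod_pow]
  rw [integral_const_mul,
    integral_finsetSum _ fun k _ => integrable_finsetSum _ fun l _ => hintegrable k l]
  simp only [integral_finsetSum _ fun l _ => hintegrable _ l, setIntegral_univ_pi_Ioo_prod_pow hε]
  rw [Finset.sum_univ_sum_univ_eq_of_diag_of_offDiag _
      (fun k => Finset.prod_univ_eq_mul_pow_of_ne _ k (a := powMoment ε (2 * p - 4))
        (c := powMoment ε (2 * p)) ?_ ?_)
      (fun k l hkl => Finset.prod_univ_eq_mul_mul_pow_of_ne _ hkl (a := powMoment ε (2 * p - 2))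
        (b := powMoment ε (2 * p - 2)) (c := powMoment ε (2 * p)) ?_ ?_ ?_)]
  -- the side goals evaluate one coordinate of the exponent `e k + e l`
  all_goals intros; simp only [e, update_apply]; split_ifs <;> first | (congr 1; omega) | simp_all

end Laplacian

theorem powMoment_quotient_eq (d p : ℕ) (hd : 2 ≤ d) (hp : 2 ≤ p) {ε : ℝ} (hε : ε ≠ 0) :
    (p * (p - 1)) ^ 2 * (d * (powMoment ε (2 * p - 4) * powMoment ε (2 * p) ^ (d - 1)) +
        d * (d - 1) * (powMoment ε (2 * p - 2) * powMoment ε (2 * p - 2) *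
          powMoment ε (2 * p) ^ (d - 2))) / powMoment ε p ^ d =
      (p : ℝ) ^ 2 * ((p : ℝ) - 1) ^ 2 * ((p : ℝ) + 1) ^ d *
        ((d : ℝ) / ((2 * (p : ℝ) - 3) * (2 * (p : ℝ) + 1) ^ (d - 1)) +
          (d : ℝ) * ((d : ℝ) - 1) / ((2 * (p : ℝ) - 1) ^ 2 * (2 * (p : ℝ) + 1) ^ (d - 2))) *
        ε ^ ((p : ℤ) * (d : ℤ) - 4) := by
  obtain ⟨q, rfl⟩ := Nat.exists_eq_add_of_le' hp
  obtain ⟨n, rfl⟩ := Nat.exists_eq_add_of_le' hd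
  have hzpow : ε ^ (((q + 2 : ℕ) : ℤ) * ((n + 2 : ℕ) : ℤ) - 4) =
      ε ^ (2 * q * n + 4 * q + 5 * n + 6) / ε ^ ((q + 3) * (n + 2)) := by
    rw [eq_div_iff (pow_ne_zero _ hε), ← zpow_natCast, ← zpow_natCast, ← zpow_add₀ hε]
    congr 1
    push_cast
    ring
  simp only [powMoment, hzpow, show 2 * (q + 2) - 4 = 2 * q by omega,
    show 2 * (q + 2) - 2 = 2 * q + 2 by omega, show n + 2 - 1 = n + 1 by omega, Nat.add_sub_cancel]
  push_cast
  rw [show 2 * ((q : ℝ) + 2) - 3 = 2 * q + 1 by ring,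
    show 2 * ((q : ℝ) + 2) - 1 = 2 * q + 3 by ring]
  simp only [div_pow]
  field_simp
  ring

/-- For `g x = ∏ i, (x i)^p` on the cube `(0,ε)^d` (`d ≥ 2`, `p ≥ 2`,
`ε > 0`), with `Δg = Σᵢ ∂²g/∂xᵢ²`,
`(∫ (Δg)² dx)/(∫ g dx) = p²·(p−1)²·(p+1)^d · [ d/((2p−3)·(2p+1)^(d−1))
  + d·(d−1)/((2p−1)²·(2p+1)^(d−2)) ] · ε^(pd−4)`. -/
theorem corner_cut_fourth_order_rayleigh_lumped_mass
    (d p : ℕ) (hd : 2 ≤ d) (hp : 2 ≤ p) (ε : ℝ) (hε : 0 < ε)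
    (g : (Fin d → ℝ) → ℝ) (hg : g = fun x => ∏ i, (x i) ^ p) :
    (∫ x in Set.univ.pi fun _ : Fin d => Set.Ioo (0:ℝ) ε,
        (∑ i, fderiv ℝ (fun y => fderiv ℝ g y (Pi.single i 1)) x (Pi.single i 1)) ^ 2) /
      (∫ x in Set.univ.pi fun _ : Fin d => Set.Ioo (0:ℝ) ε, g x)
      = (p : ℝ) ^ 2 * ((p : ℝ) - 1) ^ 2 * ((p : ℝ) + 1) ^ d *
          ((d : ℝ) / ((2 * (p : ℝ) - 3) * (2 * (p : ℝ) + 1) ^ (d - 1)) +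
            (d : ℝ) * ((d : ℝ) - 1) /
              ((2 * (p : ℝ) - 1) ^ 2 * (2 * (p : ℝ) + 1) ^ (d - 2))) *
          ε ^ ((p : ℤ) * (d : ℤ) - 4) := by
  subst hg
  have hmass := setIntegral_univ_pi_Ioo_prod_pow (ι := Fin d) hε.le fun _ => p
  rw [setIntegral_univ_pi_Ioo_sq_sum_fderiv_fderiv_prod_pow hp hε.le, hmass,
    Finset.prod_const, Finset.card_univ, Fintype.card_fin]
  exact powMoment_quotient_eq d p hd hp hε.ne'
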